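/- arXiv:2210.12025 — 2 statements merged into one kernel-verified Lean document; each statement's English description precedes it below -/
import Mathlib

section
/- Let N ≥ 1, let Ω ⊆ ℝ^N be open, and let λ ∈ (0,1], L > 0 and k > 1 satisfy λ(k−1) ≥ N. Let v : Ω → [0,∞) satisfy the Hölder condition |v(x) − v(y)| ≤ L‖x − y‖^λ for all x, y ∈ Ω, and suppose the Lebesgue integral ∫_Ω v(x)^{−(k−1)} dx (taken in [0,∞], with the convention 0^{−(k−1)} = ∞) is finite. Then v(x) > 0 for every x ∈ Ω. -/
open MeasureTheory Metric Set

lemma my_rpow_anti {a b : ENNReal} {r : ℝ} (hr : 0 ≤ r) (hab : a ≤ b) :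
    b ^ (-r) ≤ a ^ (-r) := by
  rw [ENNReal.rpow_neg, ENNReal.rpow_neg]
  exact ENNReal.inv_le_inv.mpr (ENNReal.rpow_le_rpow hab hr)

lemma my_key (N : ℕ) (hN : 1 ≤ N) (x₀ : EuclideanSpace ℝ (Fin N)) {δ r : ℝ}
    (hδ0 : 0 < δ) (hδ1 : δ ≤ 1) (hr : (N : ℝ) ≤ r) :
    ∫⁻ x in ball x₀ δ, (ENNReal.ofReal ‖x - x₀‖) ^ (-r) = ⊤ := by
  haveI : Nonempty (Fin N) := ⟨⟨0, hN⟩⟩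
  haveI : Nontrivial (EuclideanSpace ℝ (Fin N)) := inferInstance
  have hfr : Module.finrank ℝ (EuclideanSpace ℝ (Fin N)) = N := finrank_euclideanSpace_fin
  set B := volume (ball (0 : EuclideanSpace ℝ (Fin N)) 1) with hB
  have hB0 : B ≠ 0 := (measure_ball_pos _ _ one_pos).ne'
  have hBtop : B ≠ ⊤ := measure_ball_lt_top.ne
  set t : ℕ → ℝ := fun n => δ * (2 : ℝ)⁻¹ ^ n with ht
  have ht0 : ∀ n, 0 < t n := fun n => mul_pos hδ0 (pow_pos (by norm_num) n)
  have ht1 : ∀ n, t n ≤ 1 := fun n => le_trans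
    (mul_le_of_le_one_right hδ0.le (pow_le_one₀ (by norm_num) (by norm_num))) hδ1
  have htmono : ∀ m n, m ≤ n → t n ≤ t m := by
    intro m n hmn
    exact mul_le_mul_of_nonneg_left (pow_le_pow_of_le_one (by norm_num) (by norm_num) hmn) hδ0.le
  set s : ℕ → Set (EuclideanSpace ℝ (Fin N)) :=
    fun n => ball x₀ (t n) \ ball x₀ (t (n + 1)) with hs
  have hsm : ∀ n, MeasurableSet (s n) := fun n => measurableSet_ball.diff measurableSet_ball
  have hdisj : Pairwise (Function.onFun Disjoint s) := by
    have key : ∀ m n, m < n → Disjoint (s m) (s n) := by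
      intro m n hmn
      refine Set.disjoint_left.mpr fun x hxm hxn => ?_
      exact hxm.2 (lt_of_lt_of_le hxn.1 (htmono (m + 1) n hmn))
    intro m n hmn
    rcases lt_or_gt_of_ne hmn with h | h
    · exact key m n h
    · exact (key n m h).symm
  have hsub : (⋃ n, s n) ⊆ ball x₀ δ := by
    refine Set.iUnion_subset fun n => ?_
    refine (Set.diff_subset).trans (ball_subset_ball ?_)
    have h0 : t 0 = δ := by simp [ht]
    simpa [h0] using htmono 0 n (Nat.zero_le n)
  set g : EuclideanSpace ℝ (Fin N) → ENNReal :=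
    fun x => (ENNReal.ofReal ‖x - x₀‖) ^ (-r) with hg
  have hgm : Measurable g :=
    (ENNReal.measurable_ofReal.comp
      ((continuous_id.sub continuous_const).norm.measurable)).pow_const (-r)
  set c : ENNReal := ENNReal.ofReal (1 - (2 : ℝ)⁻¹ ^ N) * B with hc
  have hpos : (0:ℝ) < 1 - (2:ℝ)⁻¹ ^ N := by
    have : (2:ℝ)⁻¹ ^ N < 1 := pow_lt_one₀ (by norm_num) (by norm_num) (by omega)
    linarith
  have hc0 : c ≠ 0 := mul_ne_zero (ENNReal.ofReal_pos.mpr hpos).ne' hB0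
  have hμs : ∀ n, volume (s n) = ENNReal.ofReal (t n ^ N) * c := by
    intro n
    have hball : ∀ m : ℕ, volume (ball x₀ (t m)) = ENNReal.ofReal (t m ^ N) * B := by
      intro m
      rw [Measure.addHaar_ball volume x₀ (ht0 m).le, hfr]
    have hsubm : ball x₀ (t (n + 1)) ⊆ ball x₀ (t n) :=
      ball_subset_ball (htmono n (n + 1) (by omega))
    rw [hs]
    rw [measure_diff hsubm measurableSet_ball.nullMeasurableSet measure_ball_lt_top.ne,
      hball, hball]
    have htn1 : t (n + 1) ^ N = t n ^ N * ((2:ℝ)⁻¹ ^ N) := by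
      have : t (n + 1) = t n * 2⁻¹ := by rw [ht]; ring
      rw [this, mul_pow]
    rw [← ENNReal.sub_mul (fun _ _ => hBtop),
      ← ENNReal.ofReal_sub _ (pow_nonneg (ht0 (n + 1)).le N), hc, ← mul_assoc]
    congr 1
    rw [← ENNReal.ofReal_mul (pow_nonneg (ht0 n).le N)]
    congr 1
    rw [htn1]; ring
  have hterm : ∀ n, c ≤ ∫⁻ x in s n, g x := by
    intro n
    have hge : ∀ x ∈ s n, (ENNReal.ofReal (t n)) ^ (-r) ≤ g x := by
      intro x hx
      apply my_rpow_anti (le_trans (Nat.cast_nonneg N) hr)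
      apply ENNReal.ofReal_le_ofReal
      have := hx.1
      rw [mem_ball] at this
      have : ‖x - x₀‖ < t n := by rwa [← dist_eq_norm x x₀]
      linarith
    calc c = 1 * c := (one_mul c).symm
      _ ≤ (ENNReal.ofReal (t n)) ^ ((N : ℝ) - r) * c := by
          gcongr
          have h1 : (ENNReal.ofReal (t n)) ^ (0:ℝ) = 1 := ENNReal.rpow_zero
          rw [← h1]
          exact ENNReal.rpow_le_rpow_of_exponent_ge
            (by simpa using ENNReal.ofReal_le_one.mpr (ht1 n)) (by linarith)
      _ = (ENNReal.ofReal (t n)) ^ (-r) * (ENNReal.ofReal (t n ^ N) * c) := by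
          have hsplit : (ENNReal.ofReal (t n)) ^ ((N : ℝ) - r)
              = (ENNReal.ofReal (t n)) ^ (-r) * (ENNReal.ofReal (t n)) ^ (N : ℝ) := by
            rw [← ENNReal.rpow_add _ _ (ENNReal.ofReal_pos.mpr (ht0 n)).ne'
              ENNReal.ofReal_ne_top, add_comm, ← sub_eq_add_neg]
          rw [ENNReal.ofReal_pow (ht0 n).le, ← ENNReal.rpow_natCast (ENNReal.ofReal (t n)) N,
            hsplit, mul_assoc]
      _ = (ENNReal.ofReal (t n)) ^ (-r) * volume (s n) := by rw [hμs n]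
      _ ≤ ∫⁻ x in s n, g x := by
          rw [← setLIntegral_const (s n) _]
          exact setLIntegral_mono hgm hge
  have : (⊤ : ENNReal) ≤ ∫⁻ x in ball x₀ δ, g x := by
    calc (⊤ : ENNReal) = ∑' _ : ℕ, c := (ENNReal.tsum_const_eq_top_of_ne_zero hc0).symm
      _ ≤ ∑' n, ∫⁻ x in s n, g x := ENNReal.tsum_le_tsum hterm
      _ = ∫⁻ x in ⋃ n, s n, g x := (lintegral_iUnion hsm hdisj g).symm
      _ ≤ ∫⁻ x in ball x₀ δ, g x := lintegral_mono_set hsub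
  exact top_unique this

/-- Positivity of Hölder-continuous functions with integrable inverse power:
if `v ≥ 0` is `λ`-Hölder on the open set `Ω` with constant `L`, `λ(k−1) ≥ N`,
and `∫_Ω v^{−(k−1)} dx < ∞` (in `[0,∞]`, with `0^{−(k−1)} = ∞`), then `v > 0` on `Ω`. -/
theorem stmt_12 (N : ℕ) (hN : 1 ≤ N)
    (Ω : Set (EuclideanSpace ℝ (Fin N))) (hΩ : IsOpen Ω)
    (lam L k : ℝ) (hlam0 : 0 < lam) (hlam1 : lam ≤ 1) (hL : 0 < L) (hk : 1 < k)
    (hcrit : (N : ℝ) ≤ lam * (k - 1))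
    (v : EuclideanSpace ℝ (Fin N) → ℝ)
    (hv_nn : ∀ x ∈ Ω, 0 ≤ v x)
    (hHolder : ∀ x ∈ Ω, ∀ y ∈ Ω, |v x - v y| ≤ L * ‖x - y‖ ^ lam)
    (hint : ∫⁻ x in Ω, (ENNReal.ofReal (v x)) ^ (-(k - 1)) ≠ ⊤) :
    ∀ x ∈ Ω, 0 < v x := by
  intro x₀ hx₀
  rcases (hv_nn x₀ hx₀).lt_or_eq with h | h
  · exact h
  exfalso
  obtain ⟨ε, hε, hball⟩ := Metric.isOpen_iff.1 hΩ x₀ hx₀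
  set δ := min ε 1 with hδ
  have hδ0 : 0 < δ := lt_min hε one_pos
  have hδ1 : δ ≤ 1 := min_le_right _ _
  have hballΩ : ball x₀ δ ⊆ Ω := (ball_subset_ball (min_le_left _ _)).trans hball
  set r := lam * (k - 1) with hrdef
  have hk1 : (0:ℝ) ≤ k - 1 := by linarith
  set C : ENNReal := (ENNReal.ofReal L) ^ (-(k - 1)) with hC
  have hC0 : C ≠ 0 :=
    (ENNReal.rpow_pos (ENNReal.ofReal_pos.mpr hL) ENNReal.ofReal_ne_top).ne'
  have hgm : Measurable fun x : EuclideanSpace ℝ (Fin N) =>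
      (ENNReal.ofReal ‖x - x₀‖) ^ (-r) :=
    (ENNReal.measurable_ofReal.comp
      ((continuous_id.sub continuous_const).norm.measurable)).pow_const (-r)
  have hpw : ∀ x ∈ ball x₀ δ,
      C * (ENNReal.ofReal ‖x - x₀‖) ^ (-r) ≤ (ENNReal.ofReal (v x)) ^ (-(k - 1)) := by
    intro x hx
    have hxΩ := hballΩ hx
    have hvx : v x ≤ L * ‖x - x₀‖ ^ lam := by
      have h2 := hHolder x hxΩ x₀ hx₀
      rw [← h, sub_zero, abs_of_nonneg (hv_nn x hxΩ)] at h2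
      exact h2
    have h1 : ENNReal.ofReal (v x) ≤ ENNReal.ofReal L * (ENNReal.ofReal ‖x - x₀‖) ^ lam := by
      refine (ENNReal.ofReal_le_ofReal hvx).trans (le_of_eq ?_)
      rw [ENNReal.ofReal_mul hL.le, ENNReal.ofReal_rpow_of_nonneg (norm_nonneg _) hlam0.le]
    refine le_trans (le_of_eq ?_) (my_rpow_anti hk1 h1)
    rw [ENNReal.mul_rpow_of_ne_top ENNReal.ofReal_ne_top
      (ENNReal.rpow_ne_top_of_nonneg hlam0.le ENNReal.ofReal_ne_top),
      ← ENNReal.rpow_mul]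
    congr 1
    rw [hrdef]; ring
  have htop : (⊤ : ENNReal) ≤ ∫⁻ x in Ω, (ENNReal.ofReal (v x)) ^ (-(k - 1)) := by
    calc (⊤ : ENNReal) = C * ⊤ := (ENNReal.mul_top hC0).symm
      _ = C * ∫⁻ x in ball x₀ δ, (ENNReal.ofReal ‖x - x₀‖) ^ (-r) := by
          rw [my_key N hN x₀ hδ0 hδ1 (hrdef ▸ hcrit)]
      _ = ∫⁻ x in ball x₀ δ, C * (ENNReal.ofReal ‖x - x₀‖) ^ (-r) :=
          (lintegral_const_mul C hgm).symm
      _ ≤ ∫⁻ x in ball x₀ δ, (ENNReal.ofReal (v x)) ^ (-(k - 1)) :=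
          setLIntegral_mono' measurableSet_ball hpw
      _ ≤ ∫⁻ x in Ω, (ENNReal.ofReal (v x)) ^ (-(k - 1)) := lintegral_mono_set hballΩ
  exact hint (top_unique htop)
end

section
/- Let N ≥ 1, let Ω ⊂ ℝ^N be a bounded measurable set of positive Lebesgue measure, let k > 0 and l > 2, let v : Ω → (0,∞) be measurable, and let w be a real-valued function that is twice continuously differentiable on a neighborhood of Ω, with mean w̄ = (1/|Ω|)∫_Ω w dx. Assume that all the integrals below are finite, that the integration-by-parts identity ∫_Ω ‖∇w‖² dx = −∫_Ω (w − w̄)·Δw dx holds, and that the Poincaré–Sobolev inequality (∫_Ω |w − w̄|^l dx)^{1/l} ≤ C_S (∫_Ω ‖∇w‖² dx)^{1/2} holds with constant C_S > 0. Then ∫_Ω ‖∇w‖² dx ≤ C_S² · (∫_Ω v^k |Δw|² dx) · (∫_Ω v^{−kl/(l−2)} dx)^{(l−2)/l}. -/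
/-!
Integration by parts gives `∫ ‖∇w‖² ≤ ∫ |w - w̄| |Δw|`. Writing the integrand as
`(v^k |Δw|²)^(1/2) · (|w - w̄|^l)^(1/l) · (v^(-kl/(l-2)))^((l-2)/(2l))`, whose exponents add up to
`1`, Hölder's inequality for three functions bounds it by
`(∫ v^k |Δw|²)^(1/2) ‖w - w̄‖_l (∫ v^(-kl/(l-2)))^((l-2)/(2l))`. The Poincaré–Sobolev inequality
replaces `‖w - w̄‖_l` by `C_S (∫ ‖∇w‖²)^(1/2)`, and an inequality `D ≤ c √D` forces `D ≤ c²`.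
-/

open MeasureTheory

/-- The Laplacian of a function on Euclidean space, as the sum of the second
partial derivatives in the coordinate directions. -/
noncomputable def laplacian {N : ℕ} (w : EuclideanSpace ℝ (Fin N) → ℝ)
    (x : EuclideanSpace ℝ (Fin N)) : ℝ :=
  ∑ i : Fin N, fderiv ℝ (fun y => fderiv ℝ w y (EuclideanSpace.single i 1)) x
    (EuclideanSpace.single i 1)

theorem abs_mul_eq_weighted_rpow {v a b k l : ℝ} (hv : 0 < v) (hl : 2 < l) :
    |a * b| = (v ^ k * b ^ 2) ^ (1 / 2 : ℝ) * (|a| ^ l) ^ (1 / l) *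
      (v ^ (-(k * l / (l - 2)))) ^ ((l - 2) / (2 * l)) := by
  have hl₀ : l ≠ 0 := by linarith
  have hl₂ : l - 2 ≠ 0 := by linarith
  rw [Real.mul_rpow (by positivity) (sq_nonneg b), ← Real.rpow_mul hv.le, ← Real.rpow_mul hv.le,
    ← Real.rpow_mul (abs_nonneg a), ← Real.sqrt_eq_rpow, Real.sqrt_sq_eq_abs,
    mul_one_div_cancel hl₀, Real.rpow_one, abs_mul]
  have hexp : -(k * l / (l - 2)) * ((l - 2) / (2 * l)) = -(k * (1 / 2)) := by
    field_simp
  rw [hexp, Real.rpow_neg hv.le]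
  have : v ^ (k * (1 / 2)) ≠ 0 := (Real.rpow_pos_of_pos hv _).ne'
  field_simp

section

variable {α : Type*} [MeasurableSpace α] {μ : Measure α}

theorem integral_rpow_mul_rpow_mul_rpow_le {F G H : α → ℝ}
    (hF₀ : 0 ≤ᵐ[μ] F) (hG₀ : 0 ≤ᵐ[μ] G) (hH₀ : 0 ≤ᵐ[μ] H)
    (hF : Integrable F μ) (hG : Integrable G μ) (hH : Integrable H μ)
    {p q r : ℝ} (hp : 0 ≤ p) (hq : 0 ≤ q) (hr : 0 ≤ r) (hpqr : p + q + r = 1) :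
    ∫ x, F x ^ p * G x ^ q * H x ^ r ∂μ ≤
      (∫ x, F x ∂μ) ^ p * (∫ x, G x ∂μ) ^ q * (∫ x, H x ∂μ) ^ r := by
  have hIF := integral_nonneg_of_ae hF₀
  have hIG := integral_nonneg_of_ae hG₀
  have hIH := integral_nonneg_of_ae hH₀
  have hmeas : ∀ {f : α → ℝ}, Integrable f μ → AEMeasurable (fun x => ENNReal.ofReal (f x)) μ :=
    fun hf => hf.aemeasurable.ennreal_ofReal
  have hlint : ∫⁻ x, ENNReal.ofReal (F x ^ p * G x ^ q * H x ^ r) ∂μ ≤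
      ENNReal.ofReal ((∫ x, F x ∂μ) ^ p * (∫ x, G x ∂μ) ^ q * (∫ x, H x ∂μ) ^ r) := by
    have holder := ENNReal.lintegral_prod_norm_pow_le (μ := μ) Finset.univ
      (f := ![fun x => ENNReal.ofReal (F x), fun x => ENNReal.ofReal (G x),
        fun x => ENNReal.ofReal (H x)]) (p := ![p, q, r])
      (by simp [Fin.forall_fin_succ, hmeas hF, hmeas hG, hmeas hH])
      (by simpa [Fin.sum_univ_three] using hpqr)
      (by simp [Fin.forall_fin_succ, hp, hq, hr])
    simp only [Fin.prod_univ_three, Matrix.cons_val_zero, Matrix.cons_val_one,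
      Matrix.cons_val_two, Matrix.head_cons, Matrix.tail_cons] at holder
    rw [← ofReal_integral_eq_lintegral_ofReal hF hF₀, ← ofReal_integral_eq_lintegral_ofReal hG hG₀,
      ← ofReal_integral_eq_lintegral_ofReal hH hH₀] at holder
    convert holder using 1
    · refine lintegral_congr_ae ?_
      filter_upwards [hF₀, hG₀, hH₀] with x (hFx : 0 ≤ F x) (hGx : 0 ≤ G x) (hHx : 0 ≤ H x)
      rw [ENNReal.ofReal_mul (by positivity), ENNReal.ofReal_mul (by positivity),
        ENNReal.ofReal_rpow_of_nonneg hFx hp, ENNReal.ofReal_rpow_of_nonneg hGx hq,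
        ENNReal.ofReal_rpow_of_nonneg hHx hr]
    · rw [ENNReal.ofReal_mul (by positivity), ENNReal.ofReal_mul (by positivity),
        ENNReal.ofReal_rpow_of_nonneg hIF hp, ENNReal.ofReal_rpow_of_nonneg hIG hq,
        ENNReal.ofReal_rpow_of_nonneg hIH hr]
  have hprod : AEStronglyMeasurable (fun x => F x ^ p * G x ^ q * H x ^ r) μ := by
    have := hF.aemeasurable; have := hG.aemeasurable; have := hH.aemeasurable
    fun_prop
  rw [integral_eq_lintegral_of_nonneg_ae _ hprod]
  · exact ENNReal.toReal_le_of_le_ofReal (by positivity) hlint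
  · filter_upwards [hF₀, hG₀, hH₀] with x (hFx : 0 ≤ F x) (hGx : 0 ≤ G x) (hHx : 0 ≤ H x)
    positivity

theorem integral_abs_mul_le_weighted {v f g : α → ℝ} (hv : ∀ᵐ x ∂μ, 0 < v x) {k l : ℝ}
    (hl : 2 < l) (hg : Integrable (fun x => v x ^ k * g x ^ 2) μ)
    (hf : Integrable (fun x => |f x| ^ l) μ)
    (hvinv : Integrable (fun x => v x ^ (-(k * l / (l - 2)))) μ) :
    ∫ x, |f x * g x| ∂μ ≤
      (∫ x, v x ^ k * g x ^ 2 ∂μ) ^ (1 / 2 : ℝ) * (∫ x, |f x| ^ l ∂μ) ^ (1 / l) *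
        (∫ x, v x ^ (-(k * l / (l - 2))) ∂μ) ^ ((l - 2) / (2 * l)) := by
  have hl₀ : 0 < l := by linarith
  calc ∫ x, |f x * g x| ∂μ = ∫ x, (v x ^ k * g x ^ 2) ^ (1 / 2 : ℝ) * (|f x| ^ l) ^ (1 / l) *
        (v x ^ (-(k * l / (l - 2)))) ^ ((l - 2) / (2 * l)) ∂μ :=
      integral_congr_ae (hv.mono fun x hx => abs_mul_eq_weighted_rpow hx hl)
    _ ≤ _ := by
      refine integral_rpow_mul_rpow_mul_rpow_le ?_ ?_ ?_ hg hf hvinv (by norm_num) (by positivity)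
        (div_nonneg (by linarith) (by positivity)) (by field_simp; ring)
      · filter_upwards [hv] with x hx using by positivity
      · exact Filter.Eventually.of_forall fun x => by positivity
      · filter_upwards [hv] with x hx using by positivity

end

theorem le_sq_of_le_mul_rpow_half {D c : ℝ} (hD : 0 ≤ D) (h : D ≤ c * D ^ (1 / 2 : ℝ)) :
    D ≤ c ^ 2 := by
  rw [← Real.sqrt_eq_rpow] at h
  have hs := Real.sq_sqrt hD
  nlinarith [Real.sqrt_nonneg D]

theorem stmt_14_general (N : ℕ)
    (Ω : Set (EuclideanSpace ℝ (Fin N))) (hΩmeas : MeasurableSet Ω)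
    (k l : ℝ) (hl : 2 < l)
    (v : EuclideanSpace ℝ (Fin N) → ℝ)
    (hv_pos : ∀ x ∈ Ω, 0 < v x)
    (w : EuclideanSpace ℝ (Fin N) → ℝ)
    (wbar : ℝ)
    (C_S : ℝ)
    -- finiteness of all integrals involved
    (hint₂ : IntegrableOn (fun x => v x ^ k * (laplacian w x) ^ 2) Ω)
    (hint₃ : IntegrableOn (fun x => v x ^ (-(k * l / (l - 2)))) Ω)
    (hint₄ : IntegrableOn (fun x => |w x - wbar| ^ l) Ω)
    -- integration by parts identity
    (hIBP : ∫ x in Ω, ‖gradient w x‖ ^ 2 = -∫ x in Ω, (w x - wbar) * laplacian w x)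
    -- Poincaré–Sobolev inequality
    (hPS : (∫ x in Ω, |w x - wbar| ^ l) ^ (1 / l) ≤
      C_S * (∫ x in Ω, ‖gradient w x‖ ^ 2) ^ ((1 : ℝ) / 2)) :
    ∫ x in Ω, ‖gradient w x‖ ^ 2 ≤
      C_S ^ 2 * (∫ x in Ω, v x ^ k * (laplacian w x) ^ 2) *
        (∫ x in Ω, v x ^ (-(k * l / (l - 2)))) ^ ((l - 2) / l) := by
  set D := ∫ x in Ω, ‖gradient w x‖ ^ 2
  set A := ∫ x in Ω, v x ^ k * (laplacian w x) ^ 2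
  set B := ∫ x in Ω, v x ^ (-(k * l / (l - 2)))
  have hD : 0 ≤ D := integral_nonneg fun x => by positivity
  have hA : 0 ≤ A := setIntegral_nonneg hΩmeas fun x hx => by have := hv_pos x hx; positivity
  have hB : 0 ≤ B := setIntegral_nonneg hΩmeas fun x hx => by have := hv_pos x hx; positivity
  have key : D ≤ (C_S * A ^ (1 / 2 : ℝ) * B ^ ((l - 2) / (2 * l))) * D ^ (1 / 2 : ℝ) :=
    calc D = -∫ x in Ω, (w x - wbar) * laplacian w x := hIBP
      _ ≤ ∫ x in Ω, |(w x - wbar) * laplacian w x| :=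
        (neg_le_abs _).trans abs_integral_le_integral_abs
      _ ≤ A ^ (1 / 2 : ℝ) * (∫ x in Ω, |w x - wbar| ^ l) ^ (1 / l) * B ^ ((l - 2) / (2 * l)) :=
        integral_abs_mul_le_weighted (ae_restrict_of_forall_mem hΩmeas hv_pos) hl hint₂ hint₄
          hint₃
      _ ≤ A ^ (1 / 2 : ℝ) * (C_S * D ^ (1 / 2 : ℝ)) * B ^ ((l - 2) / (2 * l)) := by gcongr
      _ = _ := by ring
  calc D ≤ (C_S * A ^ (1 / 2 : ℝ) * B ^ ((l - 2) / (2 * l))) ^ 2 :=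
        le_sq_of_le_mul_rpow_half hD key
    _ = C_S ^ 2 * A * B ^ ((l - 2) / l) := by
      rw [mul_pow, mul_pow, ← Real.sqrt_eq_rpow, Real.sq_sqrt hA, ← Real.rpow_natCast (B ^ _),
        ← Real.rpow_mul hB]
      congr 2
      field_simp
      push_cast
      ring

/-- Weighted dissipation estimate: if `w` is `C²` on a neighborhood of the bounded
measurable set `Ω`, the integration-by-parts identity and the Poincaré–Sobolev
inequality with constant `C_S` hold, and all integrals involved are finite, then
`∫_Ω ‖∇w‖² ≤ C_S² (∫_Ω v^k |Δw|²) (∫_Ω v^{−kl/(l−2)})^{(l−2)/l}`. -/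
theorem stmt_14 (N : ℕ) (hN : 1 ≤ N)
    (Ω : Set (EuclideanSpace ℝ (Fin N))) (hΩmeas : MeasurableSet Ω)
    (hΩbdd : Bornology.IsBounded Ω) (hΩpos : 0 < volume Ω)
    (k l : ℝ) (hk : 0 < k) (hl : 2 < l)
    (v : EuclideanSpace ℝ (Fin N) → ℝ)
    (hv_meas : Measurable v) (hv_pos : ∀ x ∈ Ω, 0 < v x)
    (w : EuclideanSpace ℝ (Fin N) → ℝ)
    (hw : ∃ U : Set (EuclideanSpace ℝ (Fin N)), IsOpen U ∧ Ω ⊆ U ∧ ContDiffOn ℝ 2 w U)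
    (wbar : ℝ) (hwbar : wbar = (1 / (volume Ω).toReal) * ∫ x in Ω, w x)
    (C_S : ℝ) (hCS : 0 < C_S)
    -- finiteness of all integrals involved
    (hint₁ : IntegrableOn (fun x => ‖gradient w x‖ ^ 2) Ω)
    (hint₂ : IntegrableOn (fun x => v x ^ k * (laplacian w x) ^ 2) Ω)
    (hint₃ : IntegrableOn (fun x => v x ^ (-(k * l / (l - 2)))) Ω)
    (hint₄ : IntegrableOn (fun x => |w x - wbar| ^ l) Ω)
    (hint₅ : IntegrableOn (fun x => (w x - wbar) * laplacian w x) Ω)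
    -- integration by parts identity
    (hIBP : ∫ x in Ω, ‖gradient w x‖ ^ 2 = -∫ x in Ω, (w x - wbar) * laplacian w x)
    -- Poincaré–Sobolev inequality
    (hPS : (∫ x in Ω, |w x - wbar| ^ l) ^ (1 / l) ≤
      C_S * (∫ x in Ω, ‖gradient w x‖ ^ 2) ^ ((1 : ℝ) / 2)) :
    ∫ x in Ω, ‖gradient w x‖ ^ 2 ≤
      C_S ^ 2 * (∫ x in Ω, v x ^ k * (laplacian w x) ^ 2) *
        (∫ x in Ω, v x ^ (-(k * l / (l - 2)))) ^ ((l - 2) / l) :=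
  stmt_14_general N Ω hΩmeas k l hl v hv_pos w wbar C_S hint₂ hint₃ hint₄ hIBP hPS
end
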